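/- Let δ ≤ y < 1 satisfy the branch conditions y < δ^(β1/α2), δ^(−β1/α2)·y > δ^(β1/α1), and (δ^(−β1/α2)·y)^(−α1/β1)·δ ≥ δ^(α1/β2) (so the g-orbit of (1, y; E) follows the state pattern E → S → R → E). Then g³(1, y; E) = (1, δ^(β2/α1 + β2/α2)·y^(−β2/β1); E). In other words, the return map to the edge x = 1 along this branch pattern is y ↦ δ^(β2/α1 + β2/α2)·y^(−β2/β1). -/

import Mathlib

/-- The discrete state of a cow: eating, resting (lying down), or standing. -/
inductive CowState
  | E | R | S
deriving DecidableEq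

open CowState

/-- The Poincaré map `g` of the single-cow model, acting on points
`(x, y; θ)` of the boundary of the square `[δ,1]²` together with a state label.
Powers are real powers (`Real.rpow`). -/
noncomputable def g (α1 α2 β1 β2 δ : ℝ) : ℝ × ℝ × CowState → ℝ × ℝ × CowState
  | (_x, y, .E) =>
      if δ ^ (β1 / α2) ≤ y then (y ^ (α2 / β1), 1, R)
      else (δ, δ ^ (-(β1 / α2)) * y, S)
  | (x, _y, .R) =>
      if δ ^ (α1 / β2) ≤ x then (1, x ^ (β2 / α1), E)
      else (δ ^ (-(α1 / β2)) * x, δ, S)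
  | (x, y, .S) =>
      if x = δ then
        -- on the edge `x = δ`
        (if y ≤ δ ^ (β1 / α1) then (1, δ ^ (-(β1 / α1)) * y, E)
         else (y ^ (-(α1 / β1)) * δ, 1, R))
      else
        -- on the edge `y = δ`
        (if δ ^ (α1 / β1) ≤ x then (1, x ^ (-(β1 / α1)) * δ, E)
         else (δ ^ (-(α1 / β1)) * x, 1, R))

/-- The Poincaré section `Σ = {(1,y;E) : δ ≤ y ≤ 1} ∪ {(x,1;R) : δ ≤ x < 1}`. -/
def inSigma (δ : ℝ) : ℝ × ℝ × CowState → Prop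
  | (x, y, .E) => x = 1 ∧ δ ≤ y ∧ y ≤ 1
  | (x, y, .R) => δ ≤ x ∧ x < 1 ∧ y = 1
  | (_, _, .S) => False

/-- The first-return map `f` on the Poincaré section `Σ`:
`f(w) = g(w)` if `g(w) ∈ Σ`, and `f(w) = g(g(w))` otherwise. -/
noncomputable def f (α1 α2 β1 β2 δ : ℝ) (w : ℝ × ℝ × CowState) : ℝ × ℝ × CowState := by
  classical
  exact if inSigma δ (g α1 α2 β1 β2 δ w) then g α1 α2 β1 β2 δ w
        else g α1 α2 β1 β2 δ (g α1 α2 β1 β2 δ w)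

/-- if `δ ≤ y < 1` satisfies the branch conditions
`y < δ^(β1/α2)`, `δ^(−β1/α2)·y > δ^(β1/α1)`, and
`(δ^(−β1/α2)·y)^(−α1/β1)·δ ≥ δ^(α1/β2)` (so the `g`-orbit of `(1,y;E)`
follows the state pattern E → S → R → E), then
`g³(1,y;E) = (1, δ^(β2/α1+β2/α2)·y^(−β2/β1); E)`; i.e. the return map to the
edge `x = 1` along this branch pattern is `y ↦ δ^(β2/α1+β2/α2)·y^(−β2/β1)`. -/
theorem return_map_ESRE_branch
    (α1 α2 β1 β2 δ : ℝ)
    (hα1 : 0 < α1) (hα2 : 0 < α2) (hβ1 : 0 < β1) (hβ2 : 0 < β2)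
    (hδ0 : 0 < δ) (hδ1 : δ < 1)
    (y : ℝ) (hyl : δ ≤ y) (hyu : y < 1)
    (hb1 : y < δ ^ (β1 / α2))
    (hb2 : δ ^ (β1 / α1) < δ ^ (-(β1 / α2)) * y)
    (hb3 : δ ^ (α1 / β2) ≤ (δ ^ (-(β1 / α2)) * y) ^ (-(α1 / β1)) * δ) :
    (g α1 α2 β1 β2 δ)^[3] (1, y, E)
      = (1, δ ^ (β2 / α1 + β2 / α2) * y ^ (-(β2 / β1)), E) := by
  have hy0 : 0 < y := lt_of_lt_of_le hδ0 hyl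
  have hy'0 : 0 < δ ^ (-(β1 / α2)) * y :=
    mul_pos (Real.rpow_pos_of_pos hδ0 _) hy0
  have h1 : g α1 α2 β1 β2 δ (1, y, E) = (δ, δ ^ (-(β1 / α2)) * y, S) := by
    simp [g, not_le.2 hb1]
  have h2 : g α1 α2 β1 β2 δ (δ, δ ^ (-(β1 / α2)) * y, S)
      = ((δ ^ (-(β1 / α2)) * y) ^ (-(α1 / β1)) * δ, 1, R) := by
    simp [g, not_le.2 hb2]
  have h3 : g α1 α2 β1 β2 δ ((δ ^ (-(β1 / α2)) * y) ^ (-(α1 / β1)) * δ, 1, R)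
      = (1, ((δ ^ (-(β1 / α2)) * y) ^ (-(α1 / β1)) * δ) ^ (β2 / α1), E) := by
    simp [g, hb3]
  have key : ((δ ^ (-(β1 / α2)) * y) ^ (-(α1 / β1)) * δ) ^ (β2 / α1)
      = δ ^ (β2 / α1 + β2 / α2) * y ^ (-(β2 / β1)) := by
    rw [Real.mul_rpow (Real.rpow_pos_of_pos hy'0 _).le hδ0.le,
      Real.mul_rpow (Real.rpow_pos_of_pos hδ0 _).le hy0.le,
      Real.mul_rpow (Real.rpow_pos_of_pos (Real.rpow_pos_of_pos hδ0 _) _).le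
        (Real.rpow_pos_of_pos hy0 _).le,
      ← Real.rpow_mul hδ0.le, ← Real.rpow_mul hδ0.le,
      ← Real.rpow_mul hy0.le, mul_right_comm, ← Real.rpow_add hδ0]
    congr 1
    · congr 1
      field_simp
      ring
    · congr 1
      field_simp
  rw [Function.iterate_succ_apply, Function.iterate_succ_apply,
    Function.iterate_succ_apply, Function.iterate_zero_apply, h1, h2, h3, key]
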